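/- arXiv:2505.04092 — 8 statements merged into one kernel-verified Lean document; each statement's English description precedes it below -/
import Mathlib

section
/- Let G₁ and G₂ be finite simple graphs on disjoint vertex sets of orders n₁ and n₂. Then the boundary polynomial of the join G₁ + G₂ satisfies B(G₁+G₂;x,y) = B(K_{n₁+n₂};x,y) + x^{n₂}(B(G₁;x,y) − B(K_{n₁};x,y)) + x^{n₁}(B(G₂;x,y) − B(K_{n₂};x,y)). -/
open Finset MvPolynomial

attribute [local instance] Classical.propDecidable

/-- The outer boundary of a vertex set `S`. -/
noncomputable def outerBoundary {V : Type*} [Fintype V] (G : SimpleGraph V) (S : Finset V) :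
    Finset V :=
  Finset.univ.filter (fun v => v ∉ S ∧ ∃ u ∈ S, G.Adj u v)

/-- The boundary polynomial `B(G;x,y)` with `x = X 0`, `y = X 1`. -/
noncomputable def boundaryPoly {V : Type*} [Fintype V] (G : SimpleGraph V) :
    MvPolynomial (Fin 2) ℤ :=
  ∑ S : Finset V, X 0 ^ (outerBoundary G S).card * X 1 ^ S.card

/-- The join of two simple graphs: disjoint union plus all edges across. -/
def joinGraph {V W : Type*} (G : SimpleGraph V) (H : SimpleGraph W) :
    SimpleGraph (V ⊕ W) where
  Adj x y := Sum.LiftRel G.Adj H.Adj x y ∨ (x.isLeft ∧ y.isRight) ∨ (x.isRight ∧ y.isLeft)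
  symm := .mk fun x y h => by
    rcases h with h | ⟨a, b⟩ | ⟨a, b⟩
    · cases h with
      | inl h => exact Or.inl (Sum.LiftRel.inl h.symm)
      | inr h => exact Or.inl (Sum.LiftRel.inr h.symm)
    · exact Or.inr (Or.inr ⟨b, a⟩)
    · exact Or.inr (Or.inl ⟨b, a⟩)
  loopless := .mk fun x h => by
    rcases h with h | ⟨a, b⟩ | ⟨a, b⟩
    · cases h with
      | inl h => exact h.ne rfl
      | inr h => exact h.ne rfl
    · cases x <;> simp_all
    · cases x <;> simp_all

/-!
Write a vertex set of the join as `A ⊔ B` with `A ⊆ V`, `B ⊆ W`. If `A` and `B` are both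
nonempty, every vertex outside `A ⊔ B` has a neighbour in it, so its boundary is `Aᶜ ⊔ Bᶜ`, as in
a complete graph; if `B = ∅` the boundary is `∂_G A` together with all of `W` (when `A ≠ ∅`), and
symmetrically. Splitting the sum over `(A, B)` by emptiness therefore gives
`B(G + H) = 1 + x^{n₂} (B(G) - 1) + x^{n₁} (B(H) - 1) + ((x+y)^{n₁} - x^{n₁}) ((x+y)^{n₂} - x^{n₂})`,
and the claimed formula is a rearrangement of this, since `B(K_n) = 1 + (x+y)^n - x^n`.
-/

lemma Fintype.sum_sum_eq_add_sum_erase {α β M : Type*} [Fintype α] [Fintype β] [DecidableEq α]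
    [DecidableEq β] [AddCommMonoid M] (f : α → β → M) (a : α) (b : β) :
    ∑ i, ∑ j, f i j = f a b + ∑ i ∈ univ.erase a, f i b + ∑ j ∈ univ.erase b, f a j
      + ∑ i ∈ univ.erase a, ∑ j ∈ univ.erase b, f i j := by
  simp_rw [← add_sum_erase univ _ (mem_univ a), ← add_sum_erase univ _ (mem_univ b),
    sum_add_distrib]
  abel

lemma Fintype.sum_finset_sum_eq_sum_sum_disjSum {α β M : Type*} [Fintype α] [Fintype β]
    [AddCommMonoid M] (f : Finset (α ⊕ β) → M) :
    ∑ S, f S = ∑ A : Finset α, ∑ B : Finset β, f (A.disjSum B) := by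
  rw [← Finset.sumEquiv.symm.toEquiv.sum_comp, Fintype.sum_prod_type]
  rfl

lemma Fintype.sum_erase_empty_pow_mul_pow (α : Type*) [Fintype α] [DecidableEq (Finset α)]
    {R : Type*} [CommRing R] (a b : R) :
    ∑ s ∈ (univ : Finset (Finset α)).erase ∅, a ^ (Fintype.card α - #s) * b ^ #s =
      (a + b) ^ Fintype.card α - a ^ Fintype.card α := by
  rw [eq_sub_iff_add_eq, add_comm a, ← Fintype.sum_pow_mul_eq_add_pow,
    ← add_sum_erase univ _ (mem_univ ∅)]
  simp [mul_comm (b ^ _) (a ^ _), add_comm]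

lemma outerBoundary_empty {V : Type*} [Fintype V] (G : SimpleGraph V) :
    outerBoundary G ∅ = ∅ := by
  simp [outerBoundary]

section joinGraph

variable {V W : Type*} (G : SimpleGraph V) (H : SimpleGraph W)

@[simp] lemma joinGraph_adj_inl_inl {a a' : V} :
    (joinGraph G H).Adj (.inl a) (.inl a') ↔ G.Adj a a' := by
  simp [joinGraph]

@[simp] lemma joinGraph_adj_inr_inr {b b' : W} :
    (joinGraph G H).Adj (.inr b) (.inr b') ↔ H.Adj b b' := by
  simp [joinGraph]

@[simp] lemma joinGraph_adj_inl_inr (a : V) (b : W) : (joinGraph G H).Adj (.inl a) (.inr b) := by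
  simp [joinGraph]

@[simp] lemma joinGraph_adj_inr_inl (a : V) (b : W) : (joinGraph G H).Adj (.inr b) (.inl a) := by
  simp [joinGraph]

lemma outerBoundary_joinGraph_disjSum [Fintype V] [Fintype W] (A : Finset V) (B : Finset W) :
    outerBoundary (joinGraph G H) (A.disjSum B) =
      (if B = ∅ then outerBoundary G A else Aᶜ).disjSum
        (if A = ∅ then outerBoundary H B else Bᶜ) := by
  ext (a | b) <;>
    simp only [outerBoundary, Sum.exists, inl_mem_disjSum, inr_mem_disjSum, mem_filter, mem_univ,
      joinGraph_adj_inl_inl, joinGraph_adj_inl_inr, joinGraph_adj_inr_inl, joinGraph_adj_inr_inr,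
      and_true, true_and] <;>
    split_ifs <;> simp_all [← nonempty_iff_ne_empty, Finset.Nonempty]

lemma card_outerBoundary_joinGraph_disjSum [Fintype V] [Fintype W] (A : Finset V)
    (B : Finset W) :
    #(outerBoundary (joinGraph G H) (A.disjSum B)) =
      (if B = ∅ then #(outerBoundary G A) else Fintype.card V - #A)
        + (if A = ∅ then #(outerBoundary H B) else Fintype.card W - #B) := by
  rw [outerBoundary_joinGraph_disjSum, card_disjSum, apply_ite card, apply_ite card, card_compl,
    card_compl]

end joinGraph

lemma boundaryPoly_eq_one_add {V : Type*} [Fintype V] (G : SimpleGraph V) :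
    boundaryPoly G = 1 + ∑ S ∈ univ.erase ∅, X 0 ^ #(outerBoundary G S) * X 1 ^ #S := by
  rw [boundaryPoly, ← add_sum_erase _ _ (mem_univ ∅)]
  simp [outerBoundary_empty]

lemma boundaryPoly_joinGraph {V W : Type*} [Fintype V] [Fintype W]
    (G : SimpleGraph V) (H : SimpleGraph W) :
    boundaryPoly (joinGraph G H) =
      1 + X 0 ^ Fintype.card W * (boundaryPoly G - 1)
        + X 0 ^ Fintype.card V * (boundaryPoly H - 1)
        + ((X 0 + X 1) ^ Fintype.card V - X 0 ^ Fintype.card V)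
          * ((X 0 + X 1) ^ Fintype.card W - X 0 ^ Fintype.card W) := by
  rw [boundaryPoly, Fintype.sum_finset_sum_eq_sum_sum_disjSum,
    Fintype.sum_sum_eq_add_sum_erase _ ∅ ∅, boundaryPoly_eq_one_add G, boundaryPoly_eq_one_add H,
    ← Fintype.sum_erase_empty_pow_mul_pow V, ← Fintype.sum_erase_empty_pow_mul_pow W,
    add_sub_cancel_left, add_sub_cancel_left, mul_sum, mul_sum, sum_mul_sum]
  refine congr_arg₂ (· + ·) (congr_arg₂ (· + ·) (congr_arg₂ (· + ·) ?_ ?_) ?_) ?_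
  · simp [outerBoundary_empty]
  · refine sum_congr rfl fun A hA => ?_
    simp only [card_outerBoundary_joinGraph_disjSum, card_disjSum, ne_of_mem_erase hA,
      ↓reduceIte, card_empty, tsub_zero, add_zero, pow_add]
    ring
  · refine sum_congr rfl fun B hB => ?_
    simp only [card_outerBoundary_joinGraph_disjSum, card_disjSum, ne_of_mem_erase hB,
      ↓reduceIte, card_empty, tsub_zero, zero_add, pow_add]
    ring
  · refine sum_congr rfl fun A hA => sum_congr rfl fun B hB => ?_
    simp only [card_outerBoundary_joinGraph_disjSum, card_disjSum, ne_of_mem_erase hA,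
      ne_of_mem_erase hB, ↓reduceIte, pow_add]
    ring

/-- Boundary polynomial of the join of two graphs. -/
theorem boundaryPoly_join {V W : Type*} [Fintype V] [Fintype W]
    (G : SimpleGraph V) (H : SimpleGraph W) :
    boundaryPoly (joinGraph G H) =
      ((X 0 + X 1) ^ (Fintype.card V + Fintype.card W) + 1
          - (X 0 : MvPolynomial (Fin 2) ℤ) ^ (Fintype.card V + Fintype.card W))
      + X 0 ^ Fintype.card W *
          (boundaryPoly G - ((X 0 + X 1) ^ Fintype.card V + 1 - X 0 ^ Fintype.card V))
      + X 0 ^ Fintype.card V *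
          (boundaryPoly H - ((X 0 + X 1) ^ Fintype.card W + 1 - X 0 ^ Fintype.card W)) := by
  rw [boundaryPoly_joinGraph]
  ring
end

section
/- For the complete bipartite graph K_{n,m} (n,m ≥ 1), the boundary polynomial is B(K_{n,m};x,y) = (x+y)^{n+m} + x^n((1+y)^m − (x+y)^m) + x^m((1+y)^n − (x+y)^n) + (x^n − 1)(x^m − 1). -/
open Finset MvPolynomial

attribute [local instance] Classical.propDecidable

section Aux

variable {R : Type*} [CommRing R] {α : Type*} [Fintype α] [DecidableEq α]

lemma aux_sum_pow (x y : R) :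
    ∑ S : Finset α, x ^ Sᶜ.card * y ^ S.card = (x + y) ^ Fintype.card α := by
  have h : ((x + y) ^ Fintype.card α : R) = ∏ _i : α, (y + x) := by
    rw [Finset.prod_const, Finset.card_univ, add_comm]
  rw [h, Finset.prod_add]
  rw [Finset.powerset_univ]
  refine (Finset.sum_congr rfl fun S _ => ?_).symm
  rw [Finset.prod_const, Finset.prod_const, ← Finset.compl_eq_univ_sdiff]
  ring

lemma aux_sum_pow' (y : R) :
    ∑ S : Finset α, y ^ S.card = (1 + y) ^ Fintype.card α := by
  simpa using aux_sum_pow (1 : R) y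

lemma aux_sum_ind :
    ∑ S : Finset α, (if S = (∅ : Finset α) then (1 : R) else 0) = 1 := by
  rw [Finset.sum_ite_eq' Finset.univ (∅ : Finset α) (fun _ => (1 : R))]
  simp

end Aux

lemma outerBoundary_disjSum (n m : ℕ) (s : Finset (Fin n)) (t : Finset (Fin m)) :
    outerBoundary (completeBipartiteGraph (Fin n) (Fin m)) (s.disjSum t) =
      (if t.Nonempty then sᶜ else ∅).disjSum (if s.Nonempty then tᶜ else ∅) := by
  ext v
  cases v with
  | inl a =>
      simp only [outerBoundary, Finset.mem_filter, Finset.mem_univ, true_and,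
        Finset.inl_mem_disjSum, completeBipartiteGraph_adj]
      constructor
      · rintro ⟨ha, u, hu, hadj⟩
        cases u with
        | inl b => simp at hadj
        | inr c =>
            have ht : t.Nonempty := ⟨c, by simpa using hu⟩
            simp [ht, ha]
      · intro h
        by_cases ht : t.Nonempty
        · simp only [ht, if_pos, Finset.mem_compl] at h
          obtain ⟨c, hc⟩ := ht
          exact ⟨h, Sum.inr c, by simpa using hc, by simp⟩
        · simp [ht] at h
  | inr a =>
      simp only [outerBoundary, Finset.mem_filter, Finset.mem_univ, true_and,
        Finset.inr_mem_disjSum, completeBipartiteGraph_adj]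
      constructor
      · rintro ⟨ha, u, hu, hadj⟩
        cases u with
        | inr b => simp at hadj
        | inl c =>
            have hs : s.Nonempty := ⟨c, by simpa using hu⟩
            simp [hs, ha]
      · intro h
        by_cases hs : s.Nonempty
        · simp only [hs, if_pos, Finset.mem_compl] at h
          obtain ⟨c, hc⟩ := hs
          exact ⟨h, Sum.inl c, by simpa using hc, by simp⟩
        · simp [hs] at h

/-- Boundary polynomial of the complete bipartite graph `K_{n,m}`. -/
theorem boundaryPoly_completeBipartite (n m : ℕ) (hn : 1 ≤ n) (hm : 1 ≤ m) :
    boundaryPoly (completeBipartiteGraph (Fin n) (Fin m)) =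
      ((X 0 : MvPolynomial (Fin 2) ℤ) + X 1) ^ (n + m)
      + X 0 ^ n * ((1 + X 1) ^ m - (X 0 + X 1) ^ m)
      + X 0 ^ m * ((1 + X 1) ^ n - (X 0 + X 1) ^ n)
      + (X 0 ^ n - 1) * (X 0 ^ m - 1) := by
  classical
  set x : MvPolynomial (Fin 2) ℤ := X 0 with hx
  set y : MvPolynomial (Fin 2) ℤ := X 1 with hy
  -- the equivalence between subsets of a sum and pairs of subsets
  let e : Finset (Fin n) × Finset (Fin m) ≃ Finset (Fin n ⊕ Fin m) :=
    { toFun := fun p => p.1.disjSum p.2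
      invFun := fun S => (S.toLeft, S.toRight)
      left_inv := fun p => by simp
      right_inv := fun S => by simp [Finset.toLeft_disjSum_toRight] }
  have hsum : boundaryPoly (completeBipartiteGraph (Fin n) (Fin m)) =
      ∑ p : Finset (Fin n) × Finset (Fin m),
        x ^ (outerBoundary (completeBipartiteGraph (Fin n) (Fin m))
              (p.1.disjSum p.2)).card * y ^ (p.1.card + p.2.card) := by
    rw [boundaryPoly]
    rw [← Equiv.sum_comp e (fun S =>
      x ^ (outerBoundary (completeBipartiteGraph (Fin n) (Fin m)) S).card * y ^ S.card)]
    exact Finset.sum_congr rfl fun p _ => by simp [e, Finset.card_disjSum]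
  rw [hsum]
  -- rewrite each summand in a factorized form
  have hterm : ∀ (s : Finset (Fin n)) (t : Finset (Fin m)),
      x ^ (outerBoundary (completeBipartiteGraph (Fin n) (Fin m))
            (s.disjSum t)).card * y ^ (s.card + t.card)
      = (x ^ sᶜ.card * y ^ s.card - (if s = ∅ then 1 else 0) * x ^ n)
          * (x ^ tᶜ.card * y ^ t.card - (if t = ∅ then 1 else 0) * x ^ m)
        + (if s = ∅ then 1 else 0) * x ^ n * (y ^ t.card - (if t = ∅ then 1 else 0))
        + (if t = ∅ then 1 else 0) * x ^ m * (y ^ s.card - (if s = ∅ then 1 else 0))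
        + (if s = ∅ then 1 else 0) * (if t = ∅ then 1 else 0) := by
    intro s t
    rw [outerBoundary_disjSum, Finset.card_disjSum]
    by_cases hs : s = ∅ <;> by_cases ht : t = ∅
    · subst hs; subst ht
      simp [Finset.card_compl]
    · have ht' : t.Nonempty := Finset.nonempty_iff_ne_empty.2 ht
      subst hs
      simp only [Finset.not_nonempty_empty, if_neg, if_pos, ht, ht',
        Finset.card_empty, if_false, if_true]
      rw [Finset.compl_empty, Finset.card_univ, Fintype.card_fin]
      ring
    · have hs' : s.Nonempty := Finset.nonempty_iff_ne_empty.2 hs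
      subst ht
      simp only [Finset.not_nonempty_empty, if_neg, if_pos, hs, hs',
        Finset.card_empty, if_false, if_true]
      rw [Finset.compl_empty, Finset.card_univ, Fintype.card_fin]
      ring
    · have hs' : s.Nonempty := Finset.nonempty_iff_ne_empty.2 hs
      have ht' : t.Nonempty := Finset.nonempty_iff_ne_empty.2 ht
      simp only [hs, ht, hs', ht', if_pos, if_neg, if_false, if_true]
      ring
  simp only [Fintype.sum_prod_type]
  calc (∑ s : Finset (Fin n), ∑ t : Finset (Fin m),
        x ^ (outerBoundary (completeBipartiteGraph (Fin n) (Fin m))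
              (s.disjSum t)).card * y ^ (s.card + t.card))
      = ∑ s : Finset (Fin n), ∑ t : Finset (Fin m),
        ((x ^ sᶜ.card * y ^ s.card - (if s = ∅ then 1 else 0) * x ^ n)
          * (x ^ tᶜ.card * y ^ t.card - (if t = ∅ then 1 else 0) * x ^ m)
        + ((if s = ∅ then 1 else 0) * x ^ n) * (y ^ t.card - (if t = ∅ then 1 else 0))
        + ((if t = ∅ then 1 else 0) * x ^ m) * (y ^ s.card - (if s = ∅ then 1 else 0))
        + (if s = ∅ then 1 else 0) * (if t = ∅ then 1 else 0)) := by
        refine Finset.sum_congr rfl fun s _ => Finset.sum_congr rfl fun t _ => ?_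
        rw [hterm s t]
    _ = (∑ s : Finset (Fin n), (x ^ sᶜ.card * y ^ s.card - (if s = ∅ then 1 else 0) * x ^ n))
          * (∑ t : Finset (Fin m), (x ^ tᶜ.card * y ^ t.card - (if t = ∅ then 1 else 0) * x ^ m))
        + (∑ s : Finset (Fin n), ((if s = ∅ then (1 : MvPolynomial (Fin 2) ℤ) else 0) * x ^ n))
          * (∑ t : Finset (Fin m), (y ^ t.card - (if t = ∅ then 1 else 0)))
        + (∑ t : Finset (Fin m), ((if t = ∅ then (1 : MvPolynomial (Fin 2) ℤ) else 0) * x ^ m))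
          * (∑ s : Finset (Fin n), (y ^ s.card - (if s = ∅ then 1 else 0)))
        + (∑ s : Finset (Fin n), (if s = ∅ then (1 : MvPolynomial (Fin 2) ℤ) else 0))
          * (∑ t : Finset (Fin m), (if t = ∅ then (1 : MvPolynomial (Fin 2) ℤ) else 0)) := by
        simp only [Finset.sum_add_distrib]
        rw [← Finset.sum_mul_sum, ← Finset.sum_mul_sum, ← Finset.sum_mul_sum]
        have h3 : (∑ s : Finset (Fin n), ∑ t : Finset (Fin m),
            ((if t = ∅ then (1 : MvPolynomial (Fin 2) ℤ) else 0) * x ^ m)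
              * (y ^ s.card - if s = ∅ then 1 else 0))
            = (∑ t : Finset (Fin m), ((if t = ∅ then (1 : MvPolynomial (Fin 2) ℤ) else 0) * x ^ m))
              * (∑ s : Finset (Fin n), (y ^ s.card - if s = ∅ then 1 else 0)) := by
          rw [Finset.sum_comm, ← Finset.sum_mul_sum]
        rw [h3]
    _ = _ := by
        have e1 : ∑ s : Finset (Fin n),
            (x ^ sᶜ.card * y ^ s.card - (if s = ∅ then 1 else 0) * x ^ n)
            = (x + y) ^ n - x ^ n := by
          rw [Finset.sum_sub_distrib, ← Finset.sum_mul, aux_sum_pow, aux_sum_ind]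
          simp
        have e2 : ∑ t : Finset (Fin m),
            (x ^ tᶜ.card * y ^ t.card - (if t = ∅ then 1 else 0) * x ^ m)
            = (x + y) ^ m - x ^ m := by
          rw [Finset.sum_sub_distrib, ← Finset.sum_mul, aux_sum_pow, aux_sum_ind]
          simp
        have e3 : ∑ s : Finset (Fin n),
            (y ^ s.card - (if s = ∅ then (1 : MvPolynomial (Fin 2) ℤ) else 0))
            = (1 + y) ^ n - 1 := by
          rw [Finset.sum_sub_distrib, aux_sum_pow', aux_sum_ind]
          simp
        have e4 : ∑ t : Finset (Fin m),
            (y ^ t.card - (if t = ∅ then (1 : MvPolynomial (Fin 2) ℤ) else 0))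
            = (1 + y) ^ m - 1 := by
          rw [Finset.sum_sub_distrib, aux_sum_pow', aux_sum_ind]
          simp
        rw [e1, e2, e3, e4, ← Finset.sum_mul, ← Finset.sum_mul, aux_sum_ind, aux_sum_ind,
          pow_add]
        ring
end

section
/- For the star graph S_n on n ≥ 2 vertices (one center adjacent to n−1 leaves), the boundary polynomial is B(S_n;x,y) = (x+y)^n + 1 + x((1+y)^{n−1} − (x+y)^{n−1} − 1). -/
open Finset MvPolynomial

attribute [local instance] Classical.propDecidable

/-! A vertex set of `K_{V,W}` is `S ⊔ T` with `S ⊆ V`, `T ⊆ W`; its outer boundary is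
`(V \ S) ⊔ (W \ T)`, except that `V \ S` is dropped when `T = ∅` and `W \ T` when `S = ∅`.
Splitting the sum by which of `S`, `T` is empty and applying the binomial theorem to each piece
gives, with `a = |V|`, `b = |W|`,
`B(K_{a,b}) = 1 + x^a((1+y)^b - 1) + x^b((1+y)^a - 1) + ((x+y)^a - x^a)((x+y)^b - x^b)`,
and the star `S_n` is `K_{1,n-1}`. -/

section SumOverFinsets

variable {ι : Type*} [Fintype ι]

theorem Fintype.sum_ite_nonempty {M : Type*} [AddCommGroup M] (f g : Finset ι → M) :
    ∑ T : Finset ι, (if T.Nonempty then f T else g T) = g ∅ - f ∅ + ∑ T, f T := by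
  rw [Fintype.sum_eq_add_sum_compl ∅, Fintype.sum_eq_add_sum_compl ∅ f, if_neg (by simp)]
  have h_nonempty :
      ∀ T ∈ ({∅}ᶜ : Finset (Finset ι)), (if T.Nonempty then f T else g T) = f T :=
    fun T hT ↦ if_pos (nonempty_iff_ne_empty.2 (by simpa using hT))
  rw [Finset.sum_congr rfl h_nonempty]
  abel

theorem Fintype.sum_pow_card_eq_one_add_pow {R : Type*} [CommSemiring R] (y : R) :
    ∑ T : Finset ι, y ^ #T = (1 + y) ^ Fintype.card ι := by
  simpa [add_comm] using Fintype.sum_pow_mul_eq_add_pow ι y 1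

theorem Fintype.sum_pow_card_sub_mul_pow_card_eq_add_pow {R : Type*} [CommSemiring R] (x y : R) :
    ∑ T : Finset ι, x ^ (Fintype.card ι - #T) * y ^ #T = (x + y) ^ Fintype.card ι := by
  simpa [mul_comm, add_comm] using Fintype.sum_pow_mul_eq_add_pow ι y x

end SumOverFinsets

section CompleteBipartite

variable {V W : Type*} [Fintype V] [Fintype W]

theorem outerBoundary_completeBipartiteGraph_disjSum (S : Finset V) (T : Finset W) :
    outerBoundary (completeBipartiteGraph V W) (S.disjSum T) =
      (if T.Nonempty then Sᶜ else ∅).disjSum (if S.Nonempty then Tᶜ else ∅) := by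
  ext (v | w) <;> split_ifs <;> simp_all [outerBoundary, Finset.Nonempty, and_comm]

theorem pow_card_outerBoundary_mul_pow_card_completeBipartiteGraph {M : Type*} [CommMonoid M]
    (x y : M) (S : Finset V) (T : Finset W) :
    x ^ #(outerBoundary (completeBipartiteGraph V W) (S.disjSum T)) * y ^ #(S.disjSum T) =
      if S.Nonempty then
        if T.Nonempty then x ^ (Fintype.card V - #S) * y ^ #S * (x ^ (Fintype.card W - #T) * y ^ #T)
        else x ^ Fintype.card W * y ^ #S
      else if T.Nonempty then x ^ Fintype.card V * y ^ #T else 1 := by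
  rw [outerBoundary_completeBipartiteGraph_disjSum, card_disjSum, card_disjSum]
  split_ifs <;> simp_all [card_compl, pow_add, not_nonempty_iff_eq_empty]
  exact mul_mul_mul_comm _ _ _ _

theorem boundaryPoly_completeBipartiteGraph :
    boundaryPoly (completeBipartiteGraph V W) =
      1 + (X 0 : MvPolynomial (Fin 2) ℤ) ^ Fintype.card V * ((1 + X 1) ^ Fintype.card W - 1)
        + X 0 ^ Fintype.card W * ((1 + X 1) ^ Fintype.card V - 1)
        + ((X 0 + X 1) ^ Fintype.card V - X 0 ^ Fintype.card V)
          * ((X 0 + X 1) ^ Fintype.card W - X 0 ^ Fintype.card W) := by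
  rw [boundaryPoly, ← Equiv.sum_comp Finset.sumEquiv.symm.toEquiv, Fintype.sum_prod_type]
  simp only [RelIso.coe_fn_toEquiv, sumEquiv_symm_apply,
    pow_card_outerBoundary_mul_pow_card_completeBipartiteGraph, Finset.sum_ite_irrel,
    Fintype.sum_ite_nonempty, card_empty, Nat.sub_zero, pow_zero, mul_one, sum_add_distrib,
    sum_sub_distrib, ← mul_sum, ← sum_mul, Fintype.sum_pow_card_eq_one_add_pow,
    Fintype.sum_pow_card_sub_mul_pow_card_eq_add_pow]
  ring

end CompleteBipartite

/-- Boundary polynomial of the star graph `S_n ≃ K_{1,n-1}`. -/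
theorem boundaryPoly_star (n : ℕ) (hn : 2 ≤ n) :
    boundaryPoly (completeBipartiteGraph (Fin 1) (Fin (n - 1))) =
      ((X 0 : MvPolynomial (Fin 2) ℤ) + X 1) ^ n + 1
      + X 0 * ((1 + X 1) ^ (n - 1) - (X 0 + X 1) ^ (n - 1) - 1) := by
  obtain ⟨m, rfl⟩ : ∃ m, n = m + 1 := ⟨n - 1, by omega⟩
  rw [boundaryPoly_completeBipartiteGraph, Fintype.card_fin, Fintype.card_fin, Nat.add_sub_cancel]
  ring
end

section
/- For n ≥ 3, the boundary polynomial of the complete graph minus one edge satisfies B(K_n − e;x,y) = B(K_n;x,y) + 2 x^{n−2} y (1 − x). -/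
open Finset MvPolynomial

attribute [local instance] Classical.propDecidable

lemma exists_ne_of_ne_singleton {α : Type*} {S : Finset α} (hS : S.Nonempty) {x : α}
    (h : S ≠ {x}) : ∃ a ∈ S, a ≠ x := by
  by_contra hc
  push_neg at hc
  exact h (Finset.eq_singleton_iff_nonempty_unique_mem.mpr ⟨hS, hc⟩)

lemma ob_top {n : ℕ} (S : Finset (Fin n)) (hS : S.Nonempty) :
    outerBoundary (⊤ : SimpleGraph (Fin n)) S = Sᶜ := by
  ext w
  simp only [outerBoundary, mem_filter, mem_univ, true_and, mem_compl, SimpleGraph.top_adj]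
  constructor
  · rintro ⟨h, _⟩; exact h
  · intro h
    obtain ⟨a, ha⟩ := hS
    exact ⟨h, a, ha, fun e => h (e ▸ ha)⟩

lemma ob_top_empty {n : ℕ} : outerBoundary (⊤ : SimpleGraph (Fin n)) ∅ = ∅ := by
  ext w; simp [outerBoundary]

lemma ob_del_empty {n : ℕ} (u v : Fin n) :
    outerBoundary ((⊤ : SimpleGraph (Fin n)).deleteEdges {s(u, v)}) ∅ = ∅ := by
  ext w; simp [outerBoundary]

lemma ob_del {n : ℕ} (u v : Fin n) (huv : u ≠ v) (S : Finset (Fin n)) (hS : S.Nonempty)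
    (hSu : S ≠ {u}) (hSv : S ≠ {v}) :
    outerBoundary ((⊤ : SimpleGraph (Fin n)).deleteEdges {s(u, v)}) S = Sᶜ := by
  ext w
  simp only [outerBoundary, mem_filter, mem_univ, true_and, mem_compl,
    SimpleGraph.deleteEdges_adj, SimpleGraph.top_adj, Set.mem_singleton_iff, Sym2.eq_iff]
  constructor
  · rintro ⟨h, _⟩; exact h
  · intro h
    refine ⟨h, ?_⟩
    by_cases hwu : w = u
    · obtain ⟨a, haS, hav⟩ := exists_ne_of_ne_singleton hS hSv
      have hau : a ≠ w := fun e => h (e ▸ haS)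
      exact ⟨a, haS, hau, by rintro (⟨rfl, rfl⟩ | ⟨rfl, h2⟩) <;> simp_all⟩
    · by_cases hwv : w = v
      · obtain ⟨a, haS, hau⟩ := exists_ne_of_ne_singleton hS hSu
        have haw : a ≠ w := fun e => h (e ▸ haS)
        exact ⟨a, haS, haw, by rintro (⟨rfl, rfl⟩ | ⟨rfl, h2⟩) <;> simp_all⟩
      · obtain ⟨a, haS⟩ := hS
        have haw : a ≠ w := fun e => h (e ▸ haS)
        exact ⟨a, haS, haw, by rintro (⟨rfl, rfl⟩ | ⟨rfl, rfl⟩) <;> simp_all⟩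

lemma ob_del_singleton {n : ℕ} (u v : Fin n) (huv : u ≠ v) :
    outerBoundary ((⊤ : SimpleGraph (Fin n)).deleteEdges {s(u, v)}) {u} = ({u, v} : Finset (Fin n))ᶜ := by
  ext w
  simp only [outerBoundary, mem_filter, mem_univ, true_and, mem_compl,
    SimpleGraph.deleteEdges_adj, SimpleGraph.top_adj, Set.mem_singleton_iff, Sym2.eq_iff,
    Finset.mem_singleton, Finset.mem_insert]
  constructor
  · rintro ⟨hwu, a, rfl, hne, hbad⟩
    push_neg
    refine ⟨Ne.symm hne, fun hwv => hbad (Or.inl ⟨rfl, hwv⟩)⟩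
  · intro h
    push_neg at h
    exact ⟨h.1, u, rfl, Ne.symm h.1, by rintro (⟨-, rfl⟩ | ⟨rfl, rfl⟩) <;> simp_all⟩

lemma top_sum {n : ℕ} :
    ∑ S : Finset (Fin n), (X 0 : MvPolynomial (Fin 2) ℤ) ^ Sᶜ.card * X 1 ^ S.card
      = (X 0 + X 1) ^ n := by
  have h := Finset.prod_add (fun _ : Fin n => (X 1 : MvPolynomial (Fin 2) ℤ))
      (fun _ => (X 0 : MvPolynomial (Fin 2) ℤ)) Finset.univ
  simp only [Finset.prod_const, Finset.powerset_univ, Finset.card_univ, Fintype.card_fin] at h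
  have : ∑ S : Finset (Fin n), (X 0 : MvPolynomial (Fin 2) ℤ) ^ Sᶜ.card * X 1 ^ S.card
      = ∑ S : Finset (Fin n), (X 1 : MvPolynomial (Fin 2) ℤ) ^ S.card * X 0 ^ (Finset.univ \ S).card := by
    refine Finset.sum_congr rfl fun S _ => ?_
    rw [← Finset.compl_eq_univ_sdiff]
    ring
  rw [this, ← h]
  ring

lemma boundaryPoly_top {n : ℕ} (hn : 1 ≤ n) :
    boundaryPoly (⊤ : SimpleGraph (Fin n)) = (X 0 + X 1) ^ n + 1 - X 0 ^ n := by
  unfold boundaryPoly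
  have key : ∀ S : Finset (Fin n),
      (X 0 : MvPolynomial (Fin 2) ℤ) ^ (outerBoundary (⊤ : SimpleGraph (Fin n)) S).card * X 1 ^ S.card
        - X 0 ^ Sᶜ.card * X 1 ^ S.card
      = if S = (∅ : Finset (Fin n)) then 1 - X 0 ^ n else 0 := by
    intro S
    by_cases h : S = ∅
    · subst h
      simp [ob_top_empty, Finset.card_compl, Fintype.card_fin]
    · rw [ob_top S (Finset.nonempty_iff_ne_empty.mpr h), if_neg h, sub_self]
  have : ∑ S : Finset (Fin n),
      ((X 0 : MvPolynomial (Fin 2) ℤ) ^ (outerBoundary (⊤ : SimpleGraph (Fin n)) S).card * X 1 ^ S.card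
        - X 0 ^ Sᶜ.card * X 1 ^ S.card) = 1 - X 0 ^ n := by
    rw [Finset.sum_congr rfl (fun S _ => key S)]
    simp
  rw [Finset.sum_sub_distrib] at this
  rw [sub_eq_iff_eq_add] at this
  rw [this, top_sum]
  ring

/-- `B(K_n - e;x,y) = B(K_n;x,y) + 2x^{n-2}y(1-x)` for `n ≥ 3`. -/
theorem boundaryPoly_complete_minus_edge (n : ℕ) (hn : 3 ≤ n) (u v : Fin n) (huv : u ≠ v) :
    boundaryPoly ((⊤ : SimpleGraph (Fin n)).deleteEdges {s(u, v)}) =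
      (((X 0 : MvPolynomial (Fin 2) ℤ) + X 1) ^ n + 1 - X 0 ^ n)
      + 2 * X 0 ^ (n - 2) * X 1 * (1 - X 0) := by
  have h2 : ({u} : Finset (Fin n)) ≠ {v} := fun h => huv (Finset.singleton_inj.mp h)
  have cardu : ∀ w : Fin n, (({w} : Finset (Fin n))ᶜ).card = n - 1 := fun w => by
    simp [Finset.card_compl]
  have carduv : (({u, v} : Finset (Fin n))ᶜ).card = n - 2 := by
    rw [Finset.card_compl, Finset.card_insert_of_notMem (by simp [huv]), Finset.card_singleton,
      Fintype.card_fin]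
  have obv : outerBoundary ((⊤ : SimpleGraph (Fin n)).deleteEdges {s(u, v)}) {v}
      = ({v, u} : Finset (Fin n))ᶜ := by
    rw [show s(u,v) = s(v,u) from Sym2.eq_swap]
    exact ob_del_singleton v u huv.symm
  have carduv' : (({v, u} : Finset (Fin n))ᶜ).card = n - 2 := by
    rw [Finset.card_compl, Finset.card_insert_of_notMem (by simp [huv.symm]),
      Finset.card_singleton, Fintype.card_fin]
  have key : ∀ S : Finset (Fin n), S ∉ ({{u},{v}} : Finset (Finset (Fin n))) →
      (X 0 : MvPolynomial (Fin 2) ℤ) ^ (outerBoundary ((⊤ : SimpleGraph (Fin n)).deleteEdges {s(u, v)}) S).card * X 1 ^ S.card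
        - X 0 ^ (outerBoundary (⊤ : SimpleGraph (Fin n)) S).card * X 1 ^ S.card = 0 := by
    intro S hS
    simp only [Finset.mem_insert, Finset.mem_singleton, not_or] at hS
    by_cases h : S = ∅
    · subst h; rw [ob_del_empty, ob_top_empty, sub_self]
    · rw [ob_del u v huv S (Finset.nonempty_iff_ne_empty.mpr h) hS.1 hS.2,
        ob_top S (Finset.nonempty_iff_ne_empty.mpr h), sub_self]
  have hsum : boundaryPoly ((⊤ : SimpleGraph (Fin n)).deleteEdges {s(u, v)})
      - boundaryPoly (⊤ : SimpleGraph (Fin n))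
      = 2 * (X 0 ^ (n-2) * X 1 - X 0 ^ (n-1) * X 1) := by
    unfold boundaryPoly
    rw [← Finset.sum_sub_distrib]
    rw [← Finset.sum_subset (Finset.subset_univ ({{u},{v}} : Finset (Finset (Fin n))))
      (fun S _ hS => key S hS)]
    rw [Finset.sum_pair h2]
    rw [ob_del_singleton u v huv, obv, ob_top _ ⟨u, Finset.mem_singleton_self u⟩,
      ob_top _ ⟨v, Finset.mem_singleton_self v⟩, carduv, carduv', cardu, cardu,
      Finset.card_singleton]
    simp only [Finset.card_singleton, pow_one]
    ring
  have hb := boundaryPoly_top (n := n) (by omega)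
  have hn1 : n - 1 = (n - 2) + 1 := by omega
  rw [sub_eq_iff_eq_add] at hsum
  rw [hsum, hb, hn1, pow_succ]
  ring
end

section
/- Let G be a finite simple graph with an edge e = uv. Then B(G;x,y) − B(G−e;x,y) = (x−1)·(P₁(x,y) + P₂(x,y)), where P₁(x,y) = Σ x^{|B_{G−e}(S)|} y^{|S|} over all S ⊆ V with u ∈ S, v ∉ S, and (S \ {u}) ∩ N_{G−e}(v) = ∅, and P₂(x,y) is defined symmetrically with the roles of u and v swapped. In particular, B(G;x,y) − B(G−e;x,y) = (x−1)·Q(x,y) for a polynomial Q with nonnegative integer coefficients. -/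
open Finset MvPolynomial

attribute [local instance] Classical.propDecidable

section Aux

variable {V : Type*} [Fintype V] {G : SimpleGraph V} {u v : V}

lemma mem_ob {S : Finset V} {w : V} :
    w ∈ outerBoundary G S ↔ w ∉ S ∧ ∃ x ∈ S, G.Adj x w := by
  simp [outerBoundary]

lemma adj_del {a b : V} :
    (G.deleteEdges {s(u, v)}).Adj a b ↔
      G.Adj a b ∧ ¬(a = u ∧ b = v) ∧ ¬(a = v ∧ b = u) := by
  simp only [SimpleGraph.deleteEdges_adj, Set.mem_singleton_iff, Sym2.eq_iff]
  tauto

lemma ob_insert (huv : G.Adj u v) {S : Finset V} (hu : u ∈ S) (hv : v ∉ S)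
    (h : ∀ w ∈ S.erase u, ¬ (G.deleteEdges {s(u, v)}).Adj v w) :
    outerBoundary G S = insert v (outerBoundary (G.deleteEdges {s(u, v)}) S) ∧
      v ∉ outerBoundary (G.deleteEdges {s(u, v)}) S := by
  have hvnotob : v ∉ outerBoundary (G.deleteEdges {s(u, v)}) S := by
    rw [mem_ob]
    rintro ⟨-, x, hx, hadj⟩
    have hxu : x ≠ u := by
      rintro rfl
      exact (adj_del.1 hadj).2.1 ⟨rfl, rfl⟩
    exact h x (Finset.mem_erase.2 ⟨hxu, hx⟩) hadj.symm
  refine ⟨?_, hvnotob⟩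
  ext w
  rw [mem_ob, Finset.mem_insert, mem_ob]
  constructor
  · rintro ⟨hwS, x, hxS, hadj⟩
    by_cases hG' : (G.deleteEdges {s(u, v)}).Adj x w
    · exact Or.inr ⟨hwS, x, hxS, hG'⟩
    · have hxw : x = u ∧ w = v ∨ x = v ∧ w = u := by
        rw [adj_del] at hG'; tauto
      rcases hxw with ⟨rfl, rfl⟩ | ⟨rfl, rfl⟩
      · exact Or.inl rfl
      · exact absurd hxS hv
  · rintro (rfl | ⟨hwS, x, hxS, hadj⟩)
    · exact ⟨hv, u, hu, huv⟩
    · exact ⟨hwS, x, hxS, (adj_del.1 hadj).1⟩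

lemma ob_eq {S : Finset V}
    (h1 : ¬(u ∈ S ∧ v ∉ S ∧ ∀ w ∈ S.erase u, ¬ (G.deleteEdges {s(u, v)}).Adj v w))
    (h2 : ¬(v ∈ S ∧ u ∉ S ∧ ∀ w ∈ S.erase v, ¬ (G.deleteEdges {s(u, v)}).Adj u w)) :
    outerBoundary G S = outerBoundary (G.deleteEdges {s(u, v)}) S := by
  ext w
  rw [mem_ob, mem_ob]
  constructor
  · rintro ⟨hwS, x, hxS, hadj⟩
    refine ⟨hwS, ?_⟩
    by_cases hG' : (G.deleteEdges {s(u, v)}).Adj x w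
    · exact ⟨x, hxS, hG'⟩
    · have hxw : x = u ∧ w = v ∨ x = v ∧ w = u := by
        rw [adj_del] at hG'; tauto
      rcases hxw with ⟨rfl, rfl⟩ | ⟨rfl, rfl⟩
      · push_neg at h1
        obtain ⟨w', hw', hadj'⟩ := h1 hxS hwS
        exact ⟨w', Finset.mem_erase.1 hw' |>.2, hadj'.symm⟩
      · push_neg at h2
        obtain ⟨w', hw', hadj'⟩ := h2 hxS hwS
        exact ⟨w', Finset.mem_erase.1 hw' |>.2, hadj'.symm⟩
  · rintro ⟨hwS, x, hxS, hadj⟩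
    exact ⟨hwS, x, hxS, (adj_del.1 hadj).1⟩

lemma coeff_nonneg_sum (T : Finset (Finset V)) (a b : Finset V → ℕ) (d : Fin 2 →₀ ℕ) :
    0 ≤ (∑ S ∈ T, (X 0 : MvPolynomial (Fin 2) ℤ) ^ a S * X 1 ^ b S).coeff d := by
  rw [MvPolynomial.coeff_sum]
  refine Finset.sum_nonneg fun S _ => ?_
  rw [X_pow_eq_monomial, X_pow_eq_monomial, monomial_mul, coeff_monomial]
  split <;> norm_num

end Aux

/-- Effect of removing an edge on the boundary polynomial. -/
theorem boundaryPoly_deleteEdge {V : Type*} [Fintype V] (G : SimpleGraph V)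
    (u v : V) (huv : G.Adj u v) :
    (boundaryPoly G - boundaryPoly (G.deleteEdges {s(u, v)}) =
      (X 0 - 1) *
        ((∑ S ∈ Finset.univ.filter (fun S : Finset V =>
            u ∈ S ∧ v ∉ S ∧ ∀ w ∈ S.erase u, ¬ (G.deleteEdges {s(u, v)}).Adj v w),
            X 0 ^ (outerBoundary (G.deleteEdges {s(u, v)}) S).card * X 1 ^ S.card)
        + (∑ S ∈ Finset.univ.filter (fun S : Finset V =>
            v ∈ S ∧ u ∉ S ∧ ∀ w ∈ S.erase v, ¬ (G.deleteEdges {s(u, v)}).Adj u w),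
            X 0 ^ (outerBoundary (G.deleteEdges {s(u, v)}) S).card * X 1 ^ S.card))) ∧
    ∃ Q : MvPolynomial (Fin 2) ℤ, (∀ d, 0 ≤ Q.coeff d) ∧
      boundaryPoly G - boundaryPoly (G.deleteEdges {s(u, v)}) = (X 0 - 1) * Q := by
  have hswap : ({s(v, u)} : Set (Sym2 V)) = {s(u, v)} := by rw [Sym2.eq_swap]
  set G' := G.deleteEdges {s(u, v)} with hG'def
  set c1 : Finset V → Prop := fun S =>
    u ∈ S ∧ v ∉ S ∧ ∀ w ∈ S.erase u, ¬ G'.Adj v w with hc1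
  set c2 : Finset V → Prop := fun S =>
    v ∈ S ∧ u ∉ S ∧ ∀ w ∈ S.erase v, ¬ G'.Adj u w with hc2
  let f : Finset V → MvPolynomial (Fin 2) ℤ := fun S =>
    X 0 ^ (outerBoundary G S).card * X 1 ^ S.card
  let g : Finset V → MvPolynomial (Fin 2) ℤ := fun S =>
    X 0 ^ (outerBoundary G' S).card * X 1 ^ S.card
  have hfg : ∀ S : Finset V, f S - g S =
      X 0 ^ (outerBoundary G S).card * X 1 ^ S.card
        - X 0 ^ (outerBoundary G' S).card * X 1 ^ S.card := fun S => rfl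
  -- card lemmas
  have hcard1 : ∀ S : Finset V, c1 S →
      (outerBoundary G S).card = (outerBoundary G' S).card + 1 := by
    rintro S ⟨hu, hv, h⟩
    obtain ⟨heq, hnm⟩ := ob_insert huv hu hv h
    rw [heq, Finset.card_insert_of_notMem hnm]
  have hcard2 : ∀ S : Finset V, c2 S →
      (outerBoundary G S).card = (outerBoundary G' S).card + 1 := by
    rintro S ⟨hv, hu, h⟩
    have h' : ∀ w ∈ S.erase v, ¬ (G.deleteEdges {s(v, u)}).Adj u w := by
      rw [hswap]; exact h
    obtain ⟨heq, hnm⟩ := ob_insert huv.symm hv hu h'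
    rw [hswap] at heq hnm
    rw [heq, Finset.card_insert_of_notMem hnm]
  have hmain : boundaryPoly G - boundaryPoly G' =
      (X 0 - 1) * ((∑ S ∈ Finset.univ.filter c1, g S) + (∑ S ∈ Finset.univ.filter c2, g S)) := by
    have hsub : boundaryPoly G - boundaryPoly G' = ∑ S : Finset V, (f S - g S) := by
      rw [boundaryPoly, boundaryPoly, Finset.sum_sub_distrib]
    rw [hsub]
    have hfilter : ∑ S : Finset V, (f S - g S) =
        ∑ S ∈ Finset.univ.filter (fun S => c1 S ∨ c2 S), (f S - g S) := by
      refine (Finset.sum_filter_of_ne ?_).symm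
      intro S _ hne
      by_contra hc
      push_neg at hc
      have := ob_eq (G := G) (u := u) (v := v) (S := S) hc.1 hc.2
      apply hne
      rw [hfg, this]
      ring
    rw [hfilter]
    have hdisj : Disjoint (Finset.univ.filter c1) (Finset.univ.filter c2) := by
      rw [Finset.disjoint_filter]
      rintro S _ ⟨hu, -, -⟩ ⟨-, hu', -⟩
      exact hu' hu
    rw [Finset.filter_or, Finset.sum_union hdisj]
    have e1 : ∑ S ∈ Finset.univ.filter c1, (f S - g S) =
        (X 0 - 1) * ∑ S ∈ Finset.univ.filter c1, g S := by
      rw [Finset.mul_sum]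
      refine Finset.sum_congr rfl fun S hS => ?_
      rw [Finset.mem_filter] at hS
      rw [hfg, hcard1 S hS.2]
      show _ = (X 0 - 1) * (X 0 ^ (outerBoundary G' S).card * X 1 ^ S.card)
      ring
    have e2 : ∑ S ∈ Finset.univ.filter c2, (f S - g S) =
        (X 0 - 1) * ∑ S ∈ Finset.univ.filter c2, g S := by
      rw [Finset.mul_sum]
      refine Finset.sum_congr rfl fun S hS => ?_
      rw [Finset.mem_filter] at hS
      rw [hfg, hcard2 S hS.2]
      show _ = (X 0 - 1) * (X 0 ^ (outerBoundary G' S).card * X 1 ^ S.card)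
      ring
    rw [e1, e2]
    ring
  refine ⟨hmain, ⟨(∑ S ∈ Finset.univ.filter c1, g S) + (∑ S ∈ Finset.univ.filter c2, g S),
    fun d => ?_, hmain⟩⟩
  rw [MvPolynomial.coeff_add]
  exact add_nonneg (coeff_nonneg_sum _ _ _ d) (coeff_nonneg_sum _ _ _ d)
end

section
/- If G′ is a proper subgraph of G (same or smaller vertex set, strictly fewer vertices or strictly fewer edges), then the boundary polynomials are different: B(G;x,y) ≠ B(G′;x,y). -/
open Finset MvPolynomial

attribute [local instance] Classical.propDecidable

lemma monomial_deriv (a b : ℕ) :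
    eval (fun i => if i = 0 then (1:ℤ) else 0)
      (pderiv 0 (pderiv 1 (X 0 ^ a * X 1 ^ b : MvPolynomial (Fin 2) ℤ)))
      = if b = 1 then (a:ℤ) else 0 := by
  rw [pderiv_mul, pderiv_pow, pderiv_pow]
  simp only [pderiv_X_of_ne (by decide : (0:Fin 2) ≠ 1), pderiv_X_self, mul_zero, zero_mul,
    mul_one, zero_add]
  rw [pderiv_mul, pderiv_mul, pderiv_pow, pderiv_pow]
  match b with
  | 0 => simp
  | 1 => simp
  | (n+2) =>
    simp [pderiv_X_self, pderiv_X_of_ne (by decide : (1:Fin 2) ≠ 0)]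


lemma outerBoundary_singleton {V : Type*} [Fintype V] (G : SimpleGraph V) (v : V) :
    outerBoundary G {v} = G.neighborFinset v := by
  ext w
  simp only [outerBoundary, Finset.mem_filter, Finset.mem_univ, true_and,
    Finset.mem_singleton, SimpleGraph.mem_neighborFinset]
  constructor
  · rintro ⟨-, u, rfl, h⟩; exact h
  · intro h; exact ⟨fun hw => G.ne_of_adj h (hw ▸ rfl), v, rfl, h⟩

lemma L_boundary {V : Type*} [Fintype V] (G : SimpleGraph V) :
    eval (fun i => if i = 0 then (1:ℤ) else 0)
      (pderiv 0 (pderiv 1 (boundaryPoly G))) = ∑ v : V, (G.degree v : ℤ) := by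
  rw [boundaryPoly, map_sum, map_sum, map_sum]
  simp only [monomial_deriv]
  rw [Finset.sum_ite, Finset.sum_const_zero, add_zero]
  have h2 : Finset.univ.filter (fun S : Finset V => S.card = 1)
      = Finset.univ.image (fun v : V => ({v} : Finset V)) := by
    ext S
    simp [Finset.card_eq_one, eq_comm]
  rw [h2, Finset.sum_image (fun a _ b _ h => Finset.singleton_injective h)]
  exact Finset.sum_congr rfl fun v _ => by
    rw [outerBoundary_singleton, SimpleGraph.card_neighborFinset_eq_degree]

lemma eval_ones {V : Type*} [Fintype V] (G : SimpleGraph V) :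
    eval (fun _ : Fin 2 => (1:ℤ)) (boundaryPoly G) = 2 ^ Fintype.card V := by
  rw [boundaryPoly, map_sum]
  simp [Finset.card_univ, Fintype.card_finset]

/-- A proper subgraph has a different boundary polynomial. -/
theorem boundaryPoly_ne_of_proper_subgraph {V W : Type*} [Fintype V] [Fintype W]
    (G : SimpleGraph V) (G' : SimpleGraph W) (f : W ↪ V)
    (hadj : ∀ a b, G'.Adj a b → G.Adj (f a) (f b))
    (hproper : ¬ (Function.Surjective f ∧ ∀ a b, G'.Adj a b ↔ G.Adj (f a) (f b))) :
    boundaryPoly G ≠ boundaryPoly G' := by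
  intro heq
  by_cases hcard : Fintype.card W = Fintype.card V
  · -- f is bijective; some edge is missing
    have hbij : Function.Bijective f :=
      (Fintype.bijective_iff_injective_and_card f).2 ⟨f.injective, hcard⟩
    have hmiss : ∃ a b, G.Adj (f a) (f b) ∧ ¬ G'.Adj a b := by
      by_contra h
      push_neg at h
      exact hproper ⟨hbij.2, fun a b => ⟨hadj a b, h a b⟩⟩
    obtain ⟨a, b, hG, hG'⟩ := hmiss
    have hsub : ∀ w : W, (G'.neighborFinset w).image f ⊆ G.neighborFinset (f w) := by
      intro w x hx
      obtain ⟨u, hu, rfl⟩ := Finset.mem_image.1 hx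
      exact SimpleGraph.mem_neighborFinset _ _ _ |>.2
        (hadj w u (SimpleGraph.mem_neighborFinset _ _ _ |>.1 hu))
    have hle : ∀ w : W, G'.degree w ≤ G.degree (f w) := by
      intro w
      rw [← SimpleGraph.card_neighborFinset_eq_degree, ← SimpleGraph.card_neighborFinset_eq_degree,
        ← Finset.card_image_of_injective _ f.injective]
      exact Finset.card_le_card (hsub w)
    have hlt : G'.degree a < G.degree (f a) := by
      rw [← SimpleGraph.card_neighborFinset_eq_degree, ← SimpleGraph.card_neighborFinset_eq_degree,
        ← Finset.card_image_of_injective _ f.injective]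
      refine Finset.card_lt_card ⟨hsub a, fun hsup => ?_⟩
      have : f b ∈ (G'.neighborFinset a).image f :=
        hsup ((SimpleGraph.mem_neighborFinset _ _ _).2 hG)
      obtain ⟨u, hu, hfu⟩ := Finset.mem_image.1 this
      rw [f.injective hfu] at hu
      exact hG' ((SimpleGraph.mem_neighborFinset _ _ _).1 hu)
    have hsumlt : ∑ w : W, G'.degree w < ∑ v : V, G.degree v := by
      calc ∑ w : W, G'.degree w < ∑ w : W, G.degree (f w) :=
            Finset.sum_lt_sum (fun w _ => hle w) ⟨a, Finset.mem_univ a, hlt⟩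
        _ = ∑ v : V, G.degree v := Fintype.sum_bijective f hbij _ _ (fun w => rfl)
    have heval := congrArg (fun p => eval (fun i : Fin 2 => if i = 0 then (1:ℤ) else 0)
      (pderiv 0 (pderiv 1 p))) heq
    simp only [L_boundary] at heval
    have hz : ∑ w : W, (G'.degree w : ℤ) < ∑ v : V, (G.degree v : ℤ) := by
      exact_mod_cast hsumlt
    exact absurd heval (ne_of_gt (by exact_mod_cast hsumlt))
  · have := congrArg (eval (fun _ : Fin 2 => (1:ℤ))) heq
    rw [eval_ones, eval_ones] at this
    have : (2:ℤ) ^ Fintype.card V = 2 ^ Fintype.card W := this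
    have h2 : Fintype.card V = Fintype.card W := by
      have := this
      exact_mod_cast Nat.pow_right_injective (le_refl 2) (by exact_mod_cast this)
    exact hcard h2.symm
end

section
/- A finite simple graph G has an isolated vertex if and only if its boundary polynomial B(G;x,y) is divisible by (y+1) as a polynomial in ℤ[x,y]. Moreover, the multiplicity of the factor (y+1) in B(G;x,y) equals the number of isolated vertices of G. -/
open Finset MvPolynomial

attribute [local instance] Classical.propDecidable

/-!
Vertices split into the isolated ones `I` and the rest `J`, and both sets are closed under
adjacency, so `B(G) = (y + 1) ^ |I| * Q` where `Q` is the sum over subsets of `J`. It remains to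
see that `y + 1 ∤ Q`, i.e. that `Q(2, -1) = ∑_{T ⊆ J} (-1)^|T| 2^|B(T)|` is nonzero. This sum is
multiplicative over connected components, and for a component `C` with at least two vertices it
is `2` modulo `4`: only the sets with `|B(T)| ≤ 1` survive, namely `∅` and `C`, plus, for each
`w ∈ C`, an odd number of sets with `B(T) = {w}`. The latter holds because `T ↦ (C \ {w}) \ T`
is a fixed-point-free involution of the sets `T ⊆ C \ {w}` with `B(T) ⊆ {w}`, and `∅` is the
only one among them with empty boundary.
-/

theorem Finset.sum_powerset_union {α M : Type*} [DecidableEq α] [AddCommMonoid M]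
    {A B : Finset α} (h : Disjoint A B) (f : Finset α → M) :
    ∑ T ∈ (A ∪ B).powerset, f T = ∑ a ∈ A.powerset, ∑ b ∈ B.powerset, f (a ∪ b) := by
  rw [powerset_union]
  change ∑ T ∈ (A.powerset ×ˢ B.powerset).image (fun p => p.1 ∪ p.2), f T = _
  rw [sum_image, sum_product]
  rintro ⟨a, b⟩ hab ⟨a', b'⟩ hab' heq
  simp only [coe_product, Set.mem_prod, mem_coe, mem_powerset] at hab hab' heq
  have hA : ∀ {a b}, a ⊆ A → b ⊆ B → (a ∪ b) ∩ A = a := fun ha hb => by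
    rw [union_inter_distrib_right, inter_eq_left.2 ha,
      disjoint_iff_inter_eq_empty.1 (h.mono_right hb |>.symm), union_empty]
  have hB : ∀ {a b}, a ⊆ A → b ⊆ B → (a ∪ b) ∩ B = b := fun ha hb => by
    rw [union_inter_distrib_right, inter_eq_left.2 hb,
      disjoint_iff_inter_eq_empty.1 (h.mono_left ha), empty_union]
  exact Prod.ext (by rw [← hA hab.1 hab.2, heq, hA hab'.1 hab'.2])
    (by rw [← hB hab.1 hab.2, heq, hB hab'.1 hab'.2])

theorem ZMod.two_mul_neg_one_pow_eq_two (k : ℕ) : (2 : ZMod 4) * (-1) ^ k = 2 := by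
  rcases neg_one_pow_eq_or (ZMod 4) k with h | h <;> rw [h] <;> decide

theorem ZMod.natCast_mul_two_eq_two_of_odd {n : ℕ} (hn : Odd n) : (n : ZMod 4) * 2 = 2 := by
  obtain ⟨k, rfl⟩ := hn
  push_cast
  ring_nf
  reduce_mod_char

theorem ZMod.one_add_neg_one_pow_add_natCast_mul_two (n : ℕ) :
    (1 + (-1) ^ n + n * 2 : ZMod 4) = 2 := by
  rcases Nat.even_or_odd n with hn | hn
  · obtain ⟨k, rfl⟩ := hn
    rw [Even.neg_one_pow ⟨k, rfl⟩]
    push_cast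
    ring_nf
    reduce_mod_char
  · rw [hn.neg_one_pow, ZMod.natCast_mul_two_eq_two_of_odd hn]
    ring

theorem dvd_pow_mul_iff_ne_zero {M : Type*} [CommMonoid M] {p q : M} (hq : ¬ p ∣ q) (k : ℕ) :
    p ∣ p ^ k * q ↔ k ≠ 0 := by
  refine ⟨?_, fun hk => (dvd_pow_self p hk).mul_right q⟩
  rintro h rfl
  exact hq (by simpa using h)

theorem not_pow_succ_dvd_pow_mul {M : Type*} [CommMonoidWithZero M] [IsCancelMulZero M]
    {p q : M} (hp : p ≠ 0) (hq : ¬ p ∣ q) (k : ℕ) : ¬ p ^ (k + 1) ∣ p ^ k * q := by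
  rwa [pow_succ, mul_dvd_mul_iff_left (pow_ne_zero k hp)]

namespace SimpleGraph

variable {V : Type*} (G : SimpleGraph V)

def IsAdjClosed (s : Finset V) : Prop :=
  ∀ ⦃u v⦄, u ∈ s → G.Adj u v → v ∈ s

variable {G}

theorem IsAdjClosed.mem_of_reachable {s : Finset V} (hs : G.IsAdjClosed s) {u w : V}
    (hu : u ∈ s) (h : G.Reachable u w) : w ∈ s := by
  rw [reachable_iff_reflTransGen] at h
  induction h with
  | refl => exact hu
  | tail _ hadj ih => exact hs ih hadj

theorem IsAdjClosed.eq_empty_or_eq {C T : Finset V} {v : V} (hreach : ∀ w ∈ C, G.Reachable v w)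
    (hT : G.IsAdjClosed T) (hTC : T ⊆ C) : T = ∅ ∨ T = C := by
  refine T.eq_empty_or_nonempty.imp_right fun ⟨u, hu⟩ => hTC.antisymm fun w hw => ?_
  exact hT.mem_of_reachable hu ((hreach u (hTC hu)).symm.trans (hreach w hw))

end SimpleGraph

open SimpleGraph

section Boundary

variable {V : Type*} [Fintype V] {G : SimpleGraph V}

theorem mem_outerBoundary {S : Finset V} {v : V} :
    v ∈ outerBoundary G S ↔ v ∉ S ∧ ∃ u ∈ S, G.Adj u v := by
  simp [outerBoundary]

@[simp]
theorem outerBoundary_empty_s15 : outerBoundary G ∅ = ∅ := by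
  ext v; simp [mem_outerBoundary]

theorem outerBoundary_eq_empty_iff {S : Finset V} : outerBoundary G S = ∅ ↔ G.IsAdjClosed S := by
  simp only [eq_empty_iff_forall_notMem, mem_outerBoundary, IsAdjClosed]
  grind

theorem SimpleGraph.IsAdjClosed.outerBoundary_subset {s T : Finset V} (hs : G.IsAdjClosed s)
    (hT : T ⊆ s) : outerBoundary G T ⊆ s := fun v hv => by
  obtain ⟨-, u, hu, hadj⟩ := mem_outerBoundary.1 hv
  exact hs (hT hu) hadj

theorem outerBoundary_union {A B a b : Finset V} (hA : G.IsAdjClosed A) (hB : G.IsAdjClosed B)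
    (hAB : Disjoint A B) (ha : a ⊆ A) (hb : b ⊆ B) :
    outerBoundary G (a ∪ b) = outerBoundary G a ∪ outerBoundary G b := by
  ext v
  simp only [mem_outerBoundary, mem_union]
  constructor
  · rintro ⟨hv, u, hu | hu, hadj⟩
    · exact Or.inl ⟨fun h => hv (Or.inl h), u, hu, hadj⟩
    · exact Or.inr ⟨fun h => hv (Or.inr h), u, hu, hadj⟩
  · rintro (⟨hv, u, hu, hadj⟩ | ⟨hv, u, hu, hadj⟩)
    · exact ⟨not_or.2 ⟨hv, fun h => hAB.notMem_of_mem_left_finset (hA (ha hu) hadj) (hb h)⟩,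
        u, Or.inl hu, hadj⟩
    · exact ⟨not_or.2 ⟨fun h => hAB.notMem_of_mem_left_finset (ha h) (hB (hb hu) hadj), hv⟩,
        u, Or.inr hu, hadj⟩

theorem card_outerBoundary_union {A B a b : Finset V} (hA : G.IsAdjClosed A)
    (hB : G.IsAdjClosed B) (hAB : Disjoint A B) (ha : a ⊆ A) (hb : b ⊆ B) :
    #(outerBoundary G (a ∪ b)) = #(outerBoundary G a) + #(outerBoundary G b) := by
  rw [outerBoundary_union hA hB hAB ha hb, card_union_of_disjoint]
  exact hAB.mono (hA.outerBoundary_subset ha) (hB.outerBoundary_subset hb)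

end Boundary

section BoundarySum

variable {V : Type*} [Fintype V] (G : SimpleGraph V) {R : Type*} [CommSemiring R]

/-- For `U` closed under adjacency, this is `B(G[U]; x, y)` evaluated in `R`. -/
noncomputable def boundarySum (x y : R) (U : Finset V) : R :=
  ∑ T ∈ U.powerset, x ^ #(outerBoundary G T) * y ^ #T

theorem boundaryPoly_eq_boundarySum : boundaryPoly G = boundarySum G (X 0) (X 1) univ := by
  rw [boundaryPoly, boundarySum, powerset_univ]

theorem map_boundarySum {S : Type*} [CommSemiring S] (f : R →+* S) (x y : R) (U : Finset V) :
    f (boundarySum G x y U) = boundarySum G (f x) (f y) U := by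
  simp [boundarySum]

variable {G}

@[simp]
theorem boundarySum_empty (x y : R) : boundarySum G x y ∅ = 1 := by
  simp [boundarySum]

theorem boundarySum_union {A B : Finset V} (hA : G.IsAdjClosed A) (hB : G.IsAdjClosed B)
    (hAB : Disjoint A B) (x y : R) :
    boundarySum G x y (A ∪ B) = boundarySum G x y A * boundarySum G x y B := by
  rw [boundarySum, sum_powerset_union hAB, boundarySum, boundarySum, sum_mul_sum]
  refine sum_congr rfl fun a ha => sum_congr rfl fun b hb => ?_
  rw [mem_powerset] at ha hb
  rw [card_outerBoundary_union hA hB hAB ha hb, card_union_of_disjoint (hAB.mono ha hb)]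
  ring

theorem boundarySum_of_forall_not_adj {A : Finset V} (hA : ∀ v ∈ A, ∀ u, ¬ G.Adj v u)
    (x y : R) : boundarySum G x y A = (y + 1) ^ #A := by
  have hbd : ∀ T ∈ A.powerset, outerBoundary G T = ∅ := fun T hT =>
    outerBoundary_eq_empty_iff.2 fun u _ hu hadj => (hA u (mem_powerset.1 hT hu) _ hadj).elim
  rw [← sum_pow_mul_eq_add_pow, boundarySum]
  exact sum_congr rfl fun T hT => by simp [hbd T hT]

end BoundarySum

section Component

variable {V : Type*} [Fintype V] {G : SimpleGraph V} {C : Finset V} {v w : V}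

theorem filter_powerset_outerBoundary_eq_empty (hC : G.IsAdjClosed C)
    (hreach : ∀ u ∈ C, G.Reachable v u) :
    {T ∈ C.powerset | outerBoundary G T = ∅} = {∅, C} := by
  ext T
  simp only [mem_filter, mem_powerset, mem_insert, mem_singleton, outerBoundary_eq_empty_iff]
  constructor
  · exact fun ⟨hTC, hT⟩ => hT.eq_empty_or_eq hreach hTC
  · rintro (rfl | rfl)
    · exact ⟨empty_subset _, fun u _ hu => absurd hu (notMem_empty u)⟩
    · exact ⟨subset_rfl, hC⟩

theorem outerBoundary_sdiff_subset_singleton (hC : G.IsAdjClosed C) {T : Finset V}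
    (hbd : outerBoundary G T ⊆ {w}) :
    outerBoundary G (C.erase w \ T) ⊆ {w} := by
  intro x hx
  obtain ⟨hx, u, hu, hadj⟩ := mem_outerBoundary.1 hx
  rw [mem_singleton]
  by_contra hxw
  have hxT : x ∈ T := by
    by_contra hxT
    exact hx (mem_sdiff.2 ⟨mem_erase.2 ⟨hxw, hC (mem_erase.1 (mem_sdiff.1 hu).1).2 hadj⟩, hxT⟩)
  have hu' : u ∈ outerBoundary G T := mem_outerBoundary.2 ⟨(mem_sdiff.1 hu).2, x, hxT, hadj.symm⟩
  exact (mem_erase.1 (mem_sdiff.1 hu).1).1 (mem_singleton.1 (hbd hu'))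

theorem even_card_filter_outerBoundary_subset_singleton (hC : G.IsAdjClosed C)
    (hne : (C.erase w).Nonempty) :
    Even #{T ∈ (C.erase w).powerset | outerBoundary G T ⊆ {w}} := by
  rw [← ZMod.natCast_eq_zero_iff_even, card_eq_sum_ones, Nat.cast_sum, Nat.cast_one]
  refine sum_involution (fun T _ => C.erase w \ T) (fun _ _ => by decide) ?_ ?_ ?_
  · rintro T - - hT
    obtain ⟨y, hy⟩ := hne
    by_cases hyT : y ∈ T
    · exact (mem_sdiff.1 (hT ▸ hyT)).2 hyT
    · exact hyT (hT ▸ mem_sdiff.2 ⟨hy, hyT⟩)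
  · intro T hT
    rw [mem_filter, mem_powerset] at hT ⊢
    exact ⟨sdiff_subset, outerBoundary_sdiff_subset_singleton hC hT.2⟩
  · intro T hT
    exact Finset.sdiff_sdiff_eq_self (mem_powerset.1 (mem_filter.1 hT).1)

theorem odd_card_filter_outerBoundary_eq_singleton (hC : G.IsAdjClosed C)
    (hreach : ∀ u ∈ C, G.Reachable v u) (hw : w ∈ C) (hnb : ∃ u, G.Adj w u) :
    Odd #{T ∈ C.powerset | outerBoundary G T = {w}} := by
  set F := {T ∈ (C.erase w).powerset | outerBoundary G T ⊆ {w}}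
  have hF : {T ∈ C.powerset | outerBoundary G T = {w}} = F.erase ∅ := by
    ext T
    simp only [F, mem_erase, mem_filter, mem_powerset, subset_erase]
    constructor
    · rintro ⟨hTC, hbd⟩
      have hwT : w ∈ outerBoundary G T := hbd ▸ mem_singleton_self w
      refine ⟨?_, ⟨hTC, (mem_outerBoundary.1 hwT).1⟩, hbd.le⟩
      rintro rfl
      simp at hbd
    · rintro ⟨hT, ⟨hTC, hwT⟩, hbd⟩
      refine ⟨hTC, (subset_singleton_iff.1 hbd).resolve_left fun hbd => ?_⟩
      rcases (outerBoundary_eq_empty_iff.1 hbd).eq_empty_or_eq hreach hTC with rfl | rfl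
      exacts [hT rfl, hwT hw]
  have hemp : ∅ ∈ F := by simp [F]
  obtain ⟨u, hu⟩ := hnb
  have hne : (C.erase w).Nonempty := ⟨u, mem_erase.2 ⟨hu.ne', hC hw hu⟩⟩
  rw [hF, card_erase_of_mem hemp]
  exact Nat.Even.sub_odd (card_pos.2 ⟨_, hemp⟩)
    (even_card_filter_outerBoundary_subset_singleton hC hne) odd_one

theorem boundarySum_two_neg_one_eq_two (hC : G.IsAdjClosed C) (hv : v ∈ C)
    (hreach : ∀ u ∈ C, G.Reachable v u) (hnb : ∀ u ∈ C, ∃ x, G.Adj u x) :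
    boundarySum G (2 : ZMod 4) (-1) C = 2 := by
  have hterm : ∀ T ∈ C.powerset, (2 : ZMod 4) ^ #(outerBoundary G T) * (-1) ^ #T =
      (if outerBoundary G T = ∅ then (-1) ^ #T else 0) +
        ∑ w ∈ C, if outerBoundary G T = {w} then 2 else 0 := by
    intro T hT
    obtain h0 | h1 | h2 : #(outerBoundary G T) = 0 ∨ #(outerBoundary G T) = 1 ∨
        2 ≤ #(outerBoundary G T) := by omega
    · simp [card_eq_zero.1 h0]
    · obtain ⟨w, hw⟩ := card_eq_one.1 h1
      have hwC : w ∈ C := hC.outerBoundary_subset (mem_powerset.1 hT) (hw ▸ mem_singleton_self w)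
      simp [hw, hwC, ZMod.two_mul_neg_one_pow_eq_two]
    · obtain ⟨k, hk⟩ := Nat.exists_eq_add_of_le h2
      have hne : ∀ s : Finset V, #s ≤ 1 → outerBoundary G T ≠ s := by
        rintro s hs rfl
        omega
      rw [if_neg (hne ∅ (by simp)), sum_eq_zero fun w _ => if_neg (hne {w} (by simp)), hk,
        pow_add]
      simp [show (2 : ZMod 4) ^ 2 = 0 from rfl]
  rw [boundarySum, sum_congr rfl hterm, sum_add_distrib, ← sum_filter,
    filter_powerset_outerBoundary_eq_empty hC hreach, sum_pair (ne_empty_of_mem hv).symm,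
    sum_comm]
  simp_rw [← sum_filter, sum_const, nsmul_eq_mul]
  rw [sum_congr rfl fun w hw => ZMod.natCast_mul_two_eq_two_of_odd
    (odd_card_filter_outerBoundary_eq_singleton hC hreach hw (hnb w hw))]
  simpa [sum_const, nsmul_eq_mul] using ZMod.one_add_neg_one_pow_add_natCast_mul_two #C

end Component

theorem boundarySum_two_neg_one_ne_zero {V : Type*} [Fintype V] {G : SimpleGraph V}
    {U : Finset V} (hU : G.IsAdjClosed U) (hnb : ∀ u ∈ U, ∃ x, G.Adj u x) :
    boundarySum G (2 : ℤ) (-1) U ≠ 0 := by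
  induction U using Finset.strongInduction with
  | H U ih =>
  obtain rfl | ⟨v, hv⟩ := U.eq_empty_or_nonempty
  · simp
  set C := {u ∈ U | G.Reachable v u}
  have hvC : v ∈ C := mem_filter.2 ⟨hv, .refl v⟩
  have hCU : C ⊆ U := filter_subset _ _
  have hC : G.IsAdjClosed C := fun x y hx hadj => by
    rw [mem_filter] at hx ⊢
    exact ⟨hU hx.1 hadj, hx.2.trans hadj.reachable⟩
  have hD : G.IsAdjClosed (U \ C) := fun x y hx hadj => by
    rw [mem_sdiff] at hx ⊢
    exact ⟨hU hx.1 hadj, fun hy => hx.2 (mem_filter.2 ⟨hx.1,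
      (mem_filter.1 hy).2.trans hadj.symm.reachable⟩)⟩
  have hcomp : boundarySum G (2 : ℤ) (-1) C ≠ 0 := fun h => by
    have := map_boundarySum G (Int.castRingHom (ZMod 4)) 2 (-1) C
    rw [h, map_zero, map_ofNat, map_neg, map_one, boundarySum_two_neg_one_eq_two hC hvC
      (fun u hu => (mem_filter.1 hu).2) (fun u hu => hnb u (hCU hu))] at this
    exact absurd this (by decide)
  rw [← union_sdiff_of_subset hCU, boundarySum_union hC hD disjoint_sdiff]
  exact mul_ne_zero hcomp (ih _ (sdiff_ssubset hCU ⟨v, hvC⟩) hD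
    fun u hu => hnb u (mem_sdiff.1 hu).1)

/-- `G` has an isolated vertex iff `(y+1) ∣ B(G;x,y)`; and the multiplicity
of the factor `(y+1)` equals the number of isolated vertices. -/
theorem boundaryPoly_isolated_factor {V : Type*} [Fintype V] (G : SimpleGraph V) :
    ((∃ v : V, ∀ u : V, ¬ G.Adj v u) ↔ ((X 1 : MvPolynomial (Fin 2) ℤ) + 1) ∣ boundaryPoly G) ∧
    (((X 1 : MvPolynomial (Fin 2) ℤ) + 1) ^
        (Finset.univ.filter (fun v : V => ∀ u : V, ¬ G.Adj v u)).card ∣ boundaryPoly G ∧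
      ¬ ((X 1 : MvPolynomial (Fin 2) ℤ) + 1) ^
        ((Finset.univ.filter (fun v : V => ∀ u : V, ¬ G.Adj v u)).card + 1) ∣ boundaryPoly G) := by
  set I := univ.filter (fun v : V => ∀ u : V, ¬ G.Adj v u)
  have hI : G.IsAdjClosed I := fun u v hu hadj => ((mem_filter.1 hu).2 v hadj).elim
  have hJ : G.IsAdjClosed (univ \ I) := fun u v hu hadj => by
    simp only [I, mem_sdiff, mem_filter, mem_univ, true_and, not_forall, not_not] at hu ⊢
    exact ⟨u, hadj.symm⟩
  set Q := boundarySum G (X 0 : MvPolynomial (Fin 2) ℤ) (X 1) (univ \ I)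
  have hB : boundaryPoly G = (X 1 + 1) ^ #I * Q := by
    rw [boundaryPoly_eq_boundarySum, ← sdiff_union_of_subset (subset_univ I),
      boundarySum_union hJ hI sdiff_disjoint,
      boundarySum_of_forall_not_adj fun v hv => (mem_filter.1 hv).2, mul_comm]
  have hQ : ¬ (X 1 + 1) ∣ Q := by
    rintro ⟨r, hr⟩
    have := congrArg (eval ![2, -1]) hr
    rw [map_boundarySum] at this
    simp only [eval_X, Matrix.cons_val_zero, Matrix.cons_val_one, map_mul, map_add, map_one,
      neg_add_cancel, zero_mul] at this
    refine boundarySum_two_neg_one_ne_zero hJ (fun u hu => ?_) this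
    simpa [I] using hu
  have hp : (X 1 + 1 : MvPolynomial (Fin 2) ℤ) ≠ 0 := fun h => by
    simpa using congrArg (eval 0) h
  rw [hB, dvd_pow_mul_iff_ne_zero hQ, ← pos_iff_ne_zero, card_pos]
  exact ⟨by simp [I, Finset.Nonempty], dvd_mul_right _ _, not_pow_succ_dvd_pow_mul hp hQ _⟩
end

section
/- Let G be a finite simple graph with connected components G₁,…,G_k of orders n₁,…,n_k. Then B(G;0,y) = Π_{i=1}^k (1 + y^{n_i}), and in particular B(G;0,1) = 2^k, so the number of connected components of G equals log₂ B(G;0,1). -/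
open Finset MvPolynomial

attribute [local instance] Classical.propDecidable

section Aux

variable {V : Type*} [Fintype V] (G : SimpleGraph V)

lemma closed_of_boundary_empty {S : Finset V} (h : outerBoundary G S = ∅)
    {u v : V} (hu : u ∈ S) (hr : G.Reachable u v) : v ∈ S := by
  obtain ⟨w⟩ := hr
  induction w with
  | nil => exact hu
  | @cons a b c hadj p ih =>
    apply ih
    by_contra hv
    have hb : b ∈ outerBoundary G S :=
      Finset.mem_filter.2 ⟨Finset.mem_univ _, hv, a, hu, hadj⟩
    simp [h] at hb

/-- The union of the supports of a finset of connected components. -/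
noncomputable def compSet (T : Finset G.ConnectedComponent) : Finset V :=
  Finset.univ.filter (fun v => G.connectedComponentMk v ∈ T)

lemma mem_compSet {T : Finset G.ConnectedComponent} {v : V} :
    v ∈ compSet G T ↔ G.connectedComponentMk v ∈ T := by
  simp [compSet]

lemma compSet_boundary_empty (T : Finset G.ConnectedComponent) :
    outerBoundary G (compSet G T) = ∅ := by
  ext v
  simp only [outerBoundary, Finset.mem_filter, Finset.mem_univ, true_and,
    Finset.notMem_empty, iff_false, not_and]
  rintro hv ⟨u, hu, hadj⟩
  apply hv
  rw [mem_compSet] at hu ⊢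
  rwa [← SimpleGraph.ConnectedComponent.connectedComponentMk_eq_of_adj hadj]

lemma compSet_card (T : Finset G.ConnectedComponent) :
    (compSet G T).card = ∑ c ∈ T, c.supp.toFinset.card := by
  have : compSet G T = T.biUnion (fun c => c.supp.toFinset) := by
    ext v
    simp [mem_compSet, SimpleGraph.ConnectedComponent.mem_supp_iff, eq_comm]
  rw [this, Finset.card_biUnion]
  intro c _ d _ hcd
  simp only [Finset.disjoint_left, Set.mem_toFinset,
    SimpleGraph.ConnectedComponent.mem_supp_iff]
  rintro v rfl h
  exact hcd h

lemma compSet_injective : Function.Injective (compSet G) := by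
  intro T T' h
  ext c
  induction c using SimpleGraph.ConnectedComponent.ind with
  | _ v => rw [← mem_compSet, ← mem_compSet, h]

lemma compSet_image_mk {S : Finset V} (h : outerBoundary G S = ∅) :
    compSet G (S.image (G.connectedComponentMk)) = S := by
  ext v
  rw [mem_compSet]
  constructor
  · intro hv
    obtain ⟨u, hu, hequ⟩ := Finset.mem_image.1 hv
    exact closed_of_boundary_empty G h hu
      (SimpleGraph.ConnectedComponent.exact hequ)
  · intro hv
    exact Finset.mem_image_of_mem _ hv

end Aux

/-- `B(G;0,y) = ∏_i (1 + y^{n_i})` over the connected components, and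
`B(G;0,1) = 2^k` where `k` is the number of connected components. -/
theorem boundaryPoly_eval_zero {V : Type*} [Fintype V] (G : SimpleGraph V) :
    (∀ y : ℤ, MvPolynomial.eval ![0, y] (boundaryPoly G) =
      ∏ c : G.ConnectedComponent, (1 + y ^ c.supp.toFinset.card)) ∧
    MvPolynomial.eval ![0, 1] (boundaryPoly G) = 2 ^ Fintype.card G.ConnectedComponent := by
  have key : ∀ y : ℤ, MvPolynomial.eval ![0, y] (boundaryPoly G) =
      ∏ c : G.ConnectedComponent, (1 + y ^ c.supp.toFinset.card) := by
    intro y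
    have h1 : MvPolynomial.eval ![0, y] (boundaryPoly G) =
        ∑ S : Finset V, (if outerBoundary G S = ∅ then y ^ S.card else 0) := by
      rw [boundaryPoly, map_sum]
      refine Finset.sum_congr rfl fun S _ => ?_
      simp only [map_mul, map_pow, eval_X, Matrix.cons_val_zero, Matrix.cons_val_one,
        Matrix.head_cons]
      rcases eq_or_ne (outerBoundary G S) ∅ with h | h
      · simp [h]
      · rw [if_neg h, zero_pow, zero_mul]
        simpa [Finset.card_eq_zero] using h
    rw [h1, ← Finset.sum_filter]
    have h2 : ∑ S ∈ Finset.univ.filter (fun S => outerBoundary G S = ∅), (y ^ S.card : ℤ) =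
        ∑ T : Finset G.ConnectedComponent, y ^ (compSet G T).card := by
      refine Finset.sum_bij' (fun S _ => S.image G.connectedComponentMk)
        (fun T _ => compSet G T) ?_ ?_ ?_ ?_ ?_
      · intro S _; exact Finset.mem_univ _
      · intro T _
        exact Finset.mem_filter.2 ⟨Finset.mem_univ _, compSet_boundary_empty G T⟩
      · intro S hS
        exact compSet_image_mk G (Finset.mem_filter.1 hS).2
      · intro T _
        apply compSet_injective G
        exact compSet_image_mk G (compSet_boundary_empty G T)
      · intro S hS
        rw [compSet_image_mk G (Finset.mem_filter.1 hS).2]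
    rw [h2]
    have h3 : ∀ T : Finset G.ConnectedComponent,
        (y : ℤ) ^ (compSet G T).card = ∏ c ∈ T, y ^ c.supp.toFinset.card := by
      intro T
      rw [compSet_card, Finset.prod_pow_eq_pow_sum]
    simp_rw [h3]
    have h4 := Finset.prod_add (fun c : G.ConnectedComponent => y ^ c.supp.toFinset.card)
      (fun _ => (1 : ℤ)) Finset.univ
    simp only [Finset.prod_const_one, mul_one, Finset.powerset_univ] at h4
    simp_rw [add_comm (1 : ℤ)]
    rw [h4]
  refine ⟨key, ?_⟩
  rw [key 1]
  simp [Finset.prod_const, Finset.card_univ]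
end
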